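/- The combined r-matrix r(u,v) = η·c₂/(u−v) + ζ·(h⊗f − f⊗h) satisfies the classical Yang–Baxter equation [r₁₂,r₁₃]+[r₁₂,r₂₃]+[r₁₃,r₂₃] = 0 in U(sl₂)^{⊗3}⊗ℂ(u₁,u₂,u₃) for all scalars η, ζ. -/

import Mathlib

/-!
CYBE is bilinear, so for `rᵢⱼ = pᵢⱼ cᵢⱼ + z wᵢⱼ` it splits into a Casimir part, mixed terms and
the CYBE of `w` alone. Ad-invariance of the Casimir gives `[c₁₂, c₁₃ + c₂₃] = 0 = [c₁₃, c₁₂ + c₂₃]`,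
so the Casimir part is `(p₁₂ p₁₃ - p₁₂ p₂₃ + p₁₃ p₂₃) [c₁₂, c₁₃]`, and this coefficient vanishes for
`pᵢⱼ = η / (uᵢ - uⱼ)`. Invariance also makes `cᵢⱼ` commute with `wᵢₖ + wⱼₖ`, which kills the
mixed terms. Finally `w = h ∧ f` solves CYBE on its own since `h, f` span a subalgebra.
-/

open TensorProduct

section YangBaxter

variable {K L : Type*} [CommRing K] [LieRing L] [LieAlgebra K L]

def cybe (r₁₂ r₁₃ r₂₃ : L) : L := ⁅r₁₂, r₁₃⁆ + ⁅r₁₂, r₂₃⁆ + ⁅r₁₃, r₂₃⁆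

theorem cybe_smul_add_smul_eq_zero {c₁₂ c₁₃ c₂₃ w₁₂ w₁₃ w₂₃ : L} {p q s z : K}
    (hpqs : p * q - p * s + q * s = 0)
    (hc₁₂ : ⁅c₁₂, c₁₃ + c₂₃⁆ = 0) (hc₁₃ : ⁅c₁₃, c₁₂ + c₂₃⁆ = 0)
    (hcw₁₂ : ⁅c₁₂, w₁₃ + w₂₃⁆ = 0) (hcw₁₃ : ⁅c₁₃, w₁₂ - w₂₃⁆ = 0)
    (hcw₂₃ : ⁅c₂₃, w₁₂ + w₁₃⁆ = 0) (hw : cybe w₁₂ w₁₃ w₂₃ = 0) :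
    cybe (p • c₁₂ + z • w₁₂) (q • c₁₃ + z • w₁₃) (s • c₂₃ + z • w₂₃) = 0 := by
  have expand : cybe (p • c₁₂ + z • w₁₂) (q • c₁₃ + z • w₁₃) (s • c₂₃ + z • w₂₃) =
      (p * q - p * s + q * s) • ⁅c₁₂, c₁₃⁆ + (p * s) • ⁅c₁₂, c₁₃ + c₂₃⁆
        + (q * s) • ⁅c₁₃, c₁₂ + c₂₃⁆ + (p * z) • ⁅c₁₂, w₁₃ + w₂₃⁆
        - (q * z) • ⁅c₁₃, w₁₂ - w₂₃⁆ - (s * z) • ⁅c₂₃, w₁₂ + w₁₃⁆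
        + (z * z) • cybe w₁₂ w₁₃ w₂₃ := by
    simp only [cybe, lie_add, add_lie, lie_sub, smul_lie, lie_smul, ← lie_skew c₁₂ c₁₃,
      ← lie_skew w₁₂ c₁₃, ← lie_skew w₁₂ c₂₃, ← lie_skew w₁₃ c₂₃]
    module
  simp [expand, hpqs, hc₁₂, hc₁₃, hcw₁₂, hcw₁₃, hcw₂₃, hw]

end YangBaxter

theorem mul_inv_sub_mul_inv_add_mul_inv_eq_zero {K : Type*} [Field K] (η : K) {a b c : K}
    (hab : a ≠ b) (hac : a ≠ c) (hbc : b ≠ c) :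
    η * (a - b)⁻¹ * (η * (a - c)⁻¹) - η * (a - b)⁻¹ * (η * (b - c)⁻¹)
      + η * (a - c)⁻¹ * (η * (b - c)⁻¹) = 0 := by
  have := sub_ne_zero.2 hab
  have := sub_ne_zero.2 hac
  have := sub_ne_zero.2 hbc
  field_simp
  ring

theorem commutator_mul_add_of_commute {T : Type*} [Ring T] {a b x y : T} (hay : Commute a y)
    (hbx : Commute b x) :
    a * b * (x + y) - (x + y) * (a * b) = (a * x - x * a) * b + a * (b * y - y * b) := by
  rw [mul_add, add_mul, mul_assoc a b x, hbx.eq, ← mul_assoc, ← mul_assoc y a b, ← hay.eq]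
  noncomm_ring

structure Sl2Relations {A : Type*} [Ring A] (h e f : A) : Prop where
  lie_h_e : h * e - e * h = 2 * e
  lie_h_f : h * f - f * h = -2 * f
  lie_e_f : e * f - f * e = h

/- For algebra maps `ρ, σ : A → T` with commuting images, `sl2Casimir h e f ρ σ` and
`sl2Twist h f ρ σ` are the images of `c₂` and `w` under `a ⊗ b ↦ ρ a * σ b`; for the leg
embeddings `legᵢ, legⱼ` of `A ⊗ (A ⊗ A)` below they are `(c₂)ᵢⱼ` and `wᵢⱼ`. -/

section Twist

variable {K A T : Type*} [CommRing K] [Ring A] [Algebra K A] [Ring T] [Algebra K T]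

def sl2Twist (h f : A) (ρ σ : A →ₐ[K] T) : T := ρ h * σ f - ρ f * σ h

theorem sl2Twist_comm {h f : A} {ρ σ : A →ₐ[K] T} (hρσ : ∀ a b, Commute (ρ a) (σ b)) :
    sl2Twist h f σ ρ = -sl2Twist h f ρ σ := by
  simp only [sl2Twist, (hρσ _ _).eq]
  abel

end Twist

section Casimir

variable {K A T : Type*} [Field K] [Ring A] [Algebra K A] [Ring T] [Algebra K T]

def sl2Casimir (h e f : A) (ρ σ : A →ₐ[K] T) : T :=
  ρ e * σ f + ρ f * σ e + (1 / 2 : K) • (ρ h * σ h)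

variable {h e f : A} {ρ σ τ : A →ₐ[K] T}

theorem sl2Casimir_comm (hρσ : ∀ a b, Commute (ρ a) (σ b)) :
    sl2Casimir h e f σ ρ = sl2Casimir h e f ρ σ := by
  simp only [sl2Casimir, (hρσ _ _).eq]
  abel

theorem sl2Casimir_commute (hρτ : ∀ a b, Commute (ρ a) (τ b))
    (hστ : ∀ a b, Commute (σ a) (τ b)) (c : A) : Commute (sl2Casimir h e f ρ σ) (τ c) := by
  have hmul a b := (hρτ a c).mul_left (hστ b c)
  exact ((hmul _ _).add_left (hmul _ _)).add_left ((hmul _ _).smul_left _)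

theorem sl2Casimir_commute_add [NeZero (2 : K)] (hrel : Sl2Relations h e f)
    (hρσ : ∀ a b, Commute (ρ a) (σ b)) {x : A} (hx : x = h ∨ x = e ∨ x = f) :
    Commute (sl2Casimir h e f ρ σ) (ρ x + σ x) := by
  have leibniz a b : ρ a * σ b * (ρ x + σ x) - (ρ x + σ x) * (ρ a * σ b) =
      ρ (a * x - x * a) * σ b + ρ a * σ (b * x - x * b) := by
    rw [commutator_mul_add_of_commute (hρσ a x) (hρσ x b).symm, map_sub, map_sub, map_mul,
      map_mul, map_mul, map_mul]
  have two_mul_eq (y : A) : 2 * y = (2 : K) • y := by rw [ofNat_smul_eq_nsmul, two_mul, two_nsmul]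
  have he : h * e - e * h = (2 : K) • e := by rw [hrel.lie_h_e, two_mul_eq]
  have hf : h * f - f * h = -((2 : K) • f) := by rw [hrel.lie_h_f, neg_mul, two_mul_eq]
  have eh : e * h - h * e = -((2 : K) • e) := by rw [← neg_sub, he]
  have fh : f * h - h * f = (2 : K) • f := by rw [← neg_sub, hf, neg_neg]
  have fe : f * e - e * f = -h := by rw [← neg_sub, hrel.lie_e_f]
  rw [Commute, SemiconjBy, ← sub_eq_zero]
  have split : sl2Casimir h e f ρ σ * (ρ x + σ x) - (ρ x + σ x) * sl2Casimir h e f ρ σ =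
      (ρ e * σ f * (ρ x + σ x) - (ρ x + σ x) * (ρ e * σ f))
      + (ρ f * σ e * (ρ x + σ x) - (ρ x + σ x) * (ρ f * σ e))
      + (1 / 2 : K) • (ρ h * σ h * (ρ x + σ x) - (ρ x + σ x) * (ρ h * σ h)) := by
    simp only [sl2Casimir, add_mul, mul_add, smul_mul_assoc, mul_smul_comm]
    module
  rw [split, leibniz, leibniz, leibniz]
  rcases hx with rfl | rfl | rfl <;>
    simp only [sub_self, he, hf, eh, fh, hrel.lie_e_f, fe, map_zero, map_neg, map_smul,
      zero_mul, mul_zero, neg_mul, mul_neg, smul_mul_assoc, mul_smul_comm] <;>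
    match_scalars <;> field_simp <;> ring

theorem sl2Casimir_commute_sl2Casimir_add [NeZero (2 : K)] (hrel : Sl2Relations h e f)
    (hρσ : ∀ a b, Commute (ρ a) (σ b)) (hρτ : ∀ a b, Commute (ρ a) (τ b))
    (hστ : ∀ a b, Commute (σ a) (τ b)) :
    Commute (sl2Casimir h e f ρ σ) (sl2Casimir h e f ρ τ + sl2Casimir h e f σ τ) := by
  have hinv x (hx : x = h ∨ x = e ∨ x = f) := sl2Casimir_commute_add hrel hρσ hx
  have hleg := sl2Casimir_commute (h := h) (e := e) (f := f) hρτ hστ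
  have sum : sl2Casimir h e f ρ τ + sl2Casimir h e f σ τ =
      (ρ e + σ e) * τ f + (ρ f + σ f) * τ e + (1 / 2 : K) • ((ρ h + σ h) * τ h) := by
    simp only [sl2Casimir, add_mul, smul_add]
    abel
  rw [sum]
  exact (((hinv e (by simp)).mul_right (hleg f)).add_right
    ((hinv f (by simp)).mul_right (hleg e))).add_right
    (((hinv h (by simp)).mul_right (hleg h)).smul_right _)

theorem sl2Casimir_commute_sl2Twist_add [NeZero (2 : K)] (hrel : Sl2Relations h e f)
    (hρσ : ∀ a b, Commute (ρ a) (σ b)) (hρτ : ∀ a b, Commute (ρ a) (τ b))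
    (hστ : ∀ a b, Commute (σ a) (τ b)) :
    Commute (sl2Casimir h e f ρ σ) (sl2Twist h f ρ τ + sl2Twist h f σ τ) := by
  have hinv x (hx : x = h ∨ x = e ∨ x = f) := sl2Casimir_commute_add hrel hρσ hx
  have hleg := sl2Casimir_commute (h := h) (e := e) (f := f) hρτ hστ
  have sum : sl2Twist h f ρ τ + sl2Twist h f σ τ = (ρ h + σ h) * τ f - (ρ f + σ f) * τ h := by
    simp only [sl2Twist, add_mul]
    abel
  rw [sum]
  exact ((hinv h (by simp)).mul_right (hleg f)).sub_right
    ((hinv f (by simp)).mul_right (hleg h))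

end Casimir

section Legs

attribute [local instance] LieRing.ofAssociativeRing

open Algebra.TensorProduct

variable {K A : Type*} [CommRing K] [Ring A] [Algebra K A]

def leg₁ : A →ₐ[K] A ⊗[K] (A ⊗[K] A) := includeLeft

def leg₂ : A →ₐ[K] A ⊗[K] (A ⊗[K] A) := includeRight.comp includeLeft

def leg₃ : A →ₐ[K] A ⊗[K] (A ⊗[K] A) := includeRight.comp includeRight

theorem leg₁_mul_leg₂ (a b : A) : (leg₁ a * leg₂ b : A ⊗[K] (A ⊗[K] A)) = a ⊗ₜ (b ⊗ₜ 1) := by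
  simp [leg₁, leg₂, tmul_mul_tmul, one_def]

theorem leg₁_mul_leg₃ (a b : A) : (leg₁ a * leg₃ b : A ⊗[K] (A ⊗[K] A)) = a ⊗ₜ (1 ⊗ₜ b) := by
  simp [leg₁, leg₃, tmul_mul_tmul, one_def]

theorem leg₂_mul_leg₃ (a b : A) : (leg₂ a * leg₃ b : A ⊗[K] (A ⊗[K] A)) = 1 ⊗ₜ (a ⊗ₜ b) := by
  simp [leg₂, leg₃, tmul_mul_tmul]

theorem commute_leg₁_leg₂ (a b : A) : Commute (leg₁ a : A ⊗[K] (A ⊗[K] A)) (leg₂ b) :=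
  (Commute.one_right a).tmul (Commute.one_left _)

theorem commute_leg₁_leg₃ (a b : A) : Commute (leg₁ a : A ⊗[K] (A ⊗[K] A)) (leg₃ b) :=
  (Commute.one_right a).tmul (Commute.one_left _)

theorem commute_leg₂_leg₃ (a b : A) : Commute (leg₂ a : A ⊗[K] (A ⊗[K] A)) (leg₃ b) :=
  (Commute.one_left _).tmul ((Commute.one_right a).tmul (Commute.one_left b))

theorem cybe_sl2Twist {h f : A} (rel_hf : h * f - f * h = -2 * f) :
    cybe (sl2Twist h f (leg₁ (K := K)) leg₂) (sl2Twist h f leg₁ leg₃)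
      (sl2Twist h f leg₂ leg₃) = 0 := by
  have fh : f * h = h * f + (2 : K) • f := by
    rw [← sub_eq_iff_eq_add', ← neg_sub, rel_hf, ofNat_smul_eq_nsmul, two_nsmul]
    noncomm_ring
  simp only [cybe, sl2Twist, leg₁_mul_leg₂, leg₁_mul_leg₃, leg₂_mul_leg₃,
    LieRing.of_associative_ring_bracket, mul_sub, sub_mul, tmul_mul_tmul, one_mul, mul_one, fh,
    tmul_add, add_tmul, tmul_smul, ← smul_tmul']
  module

end Legs

section RMatrix

attribute [local instance] LieRing.ofAssociativeRing

theorem cybe_sl2_rMatrix {K A : Type*} [Field K] [NeZero (2 : K)] [Ring A] [Algebra K A]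
    {h e f : A} (hrel : Sl2Relations h e f) {p q s z : K} (hpqs : p * q - p * s + q * s = 0) :
    cybe (p • sl2Casimir h e f (leg₁ (K := K)) leg₂ + z • sl2Twist h f leg₁ leg₂)
      (q • sl2Casimir h e f leg₁ leg₃ + z • sl2Twist h f leg₁ leg₃)
      (s • sl2Casimir h e f leg₂ leg₃ + z • sl2Twist h f leg₂ leg₃) = 0 := by
  have h₁₂ := commute_leg₁_leg₂ (K := K) (A := A)
  have h₁₃ := commute_leg₁_leg₃ (K := K) (A := A)
  have h₂₃ := commute_leg₂_leg₃ (K := K) (A := A)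
  have h₂₁ a b := (h₁₂ b a).symm
  have h₃₁ a b := (h₁₃ b a).symm
  have h₃₂ a b := (h₂₃ b a).symm
  refine cybe_smul_add_smul_eq_zero hpqs ?_ ?_ ?_ ?_ ?_ (cybe_sl2Twist hrel.lie_h_f)
  · exact (sl2Casimir_commute_sl2Casimir_add hrel h₁₂ h₁₃ h₂₃).lie_eq
  · have := sl2Casimir_commute_sl2Casimir_add hrel h₁₃ h₁₂ h₃₂
    rw [sl2Casimir_comm h₂₃] at this
    exact this.lie_eq
  · exact (sl2Casimir_commute_sl2Twist_add hrel h₁₂ h₁₃ h₂₃).lie_eq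
  · have := sl2Casimir_commute_sl2Twist_add hrel h₁₃ h₁₂ h₃₂
    rw [sl2Twist_comm h₂₃, ← sub_eq_add_neg] at this
    exact this.lie_eq
  · have := (sl2Casimir_commute_sl2Twist_add hrel h₂₃ h₂₁ h₃₁).neg_right
    rw [sl2Twist_comm h₁₂, sl2Twist_comm h₁₃, neg_add, neg_neg, neg_neg] at this
    exact this.lie_eq

end RMatrix

/-- The combined rational-plus-twist r-matrix
r_{ij} = η (c₂)_{ij}/(uᵢ−uⱼ) + ζ (h⊗f − f⊗h)_{ij} satisfies the classical
Yang–Baxter equation in U(sl₂)^{⊗3} ⊗ ℂ(u₁,u₂,u₃) for all scalars η, ζ ∈ ℂ. -/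
theorem stmt_17 {A : Type*} [Ring A]
    [Algebra (FractionRing (MvPolynomial (Fin 3) ℂ)) A] (h e f : A) (η ζ : ℂ)
    (rel_he : h * e - e * h = 2 * e)
    (rel_hf : h * f - f * h = -2 * f)
    (rel_ef : e * f - f * e = h) :
    let K := FractionRing (MvPolynomial (Fin 3) ℂ)
    let ι : ℂ → K := fun z =>
      algebraMap (MvPolynomial (Fin 3) ℂ) K (MvPolynomial.C z)
    let u : Fin 3 → K := fun i => algebraMap (MvPolynomial (Fin 3) ℂ) K (MvPolynomial.X i)
    let c12 : A ⊗[K] (A ⊗[K] A) :=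
      e ⊗ₜ (f ⊗ₜ 1) + f ⊗ₜ (e ⊗ₜ 1) + ((1 : K) / 2) • (h ⊗ₜ (h ⊗ₜ 1))
    let c13 : A ⊗[K] (A ⊗[K] A) :=
      e ⊗ₜ (1 ⊗ₜ f) + f ⊗ₜ (1 ⊗ₜ e) + ((1 : K) / 2) • (h ⊗ₜ (1 ⊗ₜ h))
    let c23 : A ⊗[K] (A ⊗[K] A) :=
      1 ⊗ₜ (e ⊗ₜ f) + 1 ⊗ₜ (f ⊗ₜ e) + ((1 : K) / 2) • ((1 : A) ⊗ₜ (h ⊗ₜ h))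
    let w12 : A ⊗[K] (A ⊗[K] A) := h ⊗ₜ (f ⊗ₜ 1) - f ⊗ₜ (h ⊗ₜ 1)
    let w13 : A ⊗[K] (A ⊗[K] A) := h ⊗ₜ (1 ⊗ₜ f) - f ⊗ₜ (1 ⊗ₜ h)
    let w23 : A ⊗[K] (A ⊗[K] A) := 1 ⊗ₜ (h ⊗ₜ f) - 1 ⊗ₜ (f ⊗ₜ h)
    let r12 := (ι η * (u 0 - u 1)⁻¹) • c12 + ι ζ • w12
    let r13 := (ι η * (u 0 - u 2)⁻¹) • c13 + ι ζ • w13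
    let r23 := (ι η * (u 1 - u 2)⁻¹) • c23 + ι ζ • w23
    (r12 * r13 - r13 * r12) + (r12 * r23 - r23 * r12) +
      (r13 * r23 - r23 * r13) = 0 := by
  intro K ι u c12 c13 c23 w12 w13 w23 r12 r13 r23
  have hu {i j : Fin 3} (hij : i ≠ j) : u i ≠ u j :=
    (IsFractionRing.injective _ K).ne (MvPolynomial.X_injective.ne hij)
  have key := cybe_sl2_rMatrix (K := K) ⟨rel_he, rel_hf, rel_ef⟩ (z := ι ζ)
    (mul_inv_sub_mul_inv_add_mul_inv_eq_zero (ι η) (hu (by decide : (0 : Fin 3) ≠ 1))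
      (hu (by decide : (0 : Fin 3) ≠ 2)) (hu (by decide : (1 : Fin 3) ≠ 2)))
  simpa only [cybe, sl2Casimir, sl2Twist, leg₁_mul_leg₂, leg₁_mul_leg₃, leg₂_mul_leg₃,
    LieRing.of_associative_ring_bracket] using key
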